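/- arXiv:2006.01500 — 2 statements merged into one kernel-verified Lean document; each statement's English description precedes it below -/
import Mathlib

section
/- Let H be a finite graph, α and β positive reals, k a positive integer, m a real with m ≥ 1 and (αβ)^k ≥ m, and let A₀, B₀ be vertex subsets of H such that |N_H^{2k}[v] ∩ A₀| ≤ m for every vertex v of H. Then for all sets A₁, B₁ with ∅ ≠ A₁ ⊆ A₀ and B₁ ⊆ B₀, there exists a pair (X, Y) that is good in (A₁, B₁) with respect to α and β and satisfies X ∪ Y ≠ ∅, |X| ≤ m, and |N_H[Y] ∩ A₁| ≤ m. -/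
open SimpleGraph
open scoped Classical

/-- The closed neighborhood of a vertex set `X` in a graph `H`: all vertices of `X`
together with all vertices adjacent to a vertex of `X`. -/
noncomputable def closedNbhd {V : Type} [Fintype V] [DecidableEq V]
    (H : SimpleGraph V) (X : Finset V) : Finset V :=
  X ∪ Finset.univ.filter (fun u => ∃ x ∈ X, H.Adj x u)

/-- The set of vertices at distance at most `r` in `H` from some vertex of `X`,
obtained by iterating the closed neighborhood. -/
noncomputable def ballFinset {V : Type} [Fintype V] [DecidableEq V]
    (H : SimpleGraph V) : ℕ → Finset V → Finset V
  | 0, X => X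
  | (r + 1), X => closedNbhd H (ballFinset H r X)

/-- The pair `(X, Y)` is good in `(A₁, B₁)` with respect to `α` and `β`:
`X ⊆ A₁`, `Y ⊆ B₁`, `X` is anticomplete to `Y` in `H`, `|N_H[X] ∩ B₁| ≤ β·|X|`,
and `|N_H[Y] ∩ A₁| ≤ α·|Y|`. -/
def GoodPair {V : Type} [Fintype V] [DecidableEq V] (H : SimpleGraph V) (α β : ℝ)
    (A₁ B₁ X Y : Finset V) : Prop :=
  X ⊆ A₁ ∧ Y ⊆ B₁ ∧
  Disjoint X Y ∧ (∀ x ∈ X, ∀ y ∈ Y, ¬ H.Adj x y) ∧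
  ((closedNbhd H X ∩ B₁).card : ℝ) ≤ β * (X.card : ℝ) ∧
  ((closedNbhd H Y ∩ A₁).card : ℝ) ≤ α * (Y.card : ℝ)

lemma subset_closedNbhd' {V : Type} [Fintype V] [DecidableEq V]
    (H : SimpleGraph V) (X : Finset V) : X ⊆ closedNbhd H X :=
  Finset.subset_union_left

lemma closedNbhd_mono' {V : Type} [Fintype V] [DecidableEq V]
    (H : SimpleGraph V) {X Y : Finset V} (h : X ⊆ Y) :
    closedNbhd H X ⊆ closedNbhd H Y := by
  unfold closedNbhd
  refine Finset.union_subset_union h ?_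
  intro u hu
  simp only [Finset.mem_filter, Finset.mem_univ, true_and] at hu ⊢
  obtain ⟨x, hx, hadj⟩ := hu
  exact ⟨x, h hx, hadj⟩

lemma closedNbhd_empty' {V : Type} [Fintype V] [DecidableEq V]
    (H : SimpleGraph V) : closedNbhd H (∅ : Finset V) = ∅ := by
  simp [closedNbhd]

lemma ball_mono_r' {V : Type} [Fintype V] [DecidableEq V]
    (H : SimpleGraph V) (X : Finset V) {r s : ℕ} (h : r ≤ s) :
    ballFinset H r X ⊆ ballFinset H s X := by
  induction s with
  | zero =>
    have : r = 0 := Nat.le_zero.mp h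
    subst this; exact subset_rfl
  | succ n ih =>
    rcases Nat.lt_or_ge r (n + 1) with h' | h'
    · exact (ih (Nat.lt_succ_iff.mp h')).trans (subset_closedNbhd' H _)
    · have : r = n + 1 := le_antisymm h h'
      subst this; exact subset_rfl

theorem exists_small_good_pair {V : Type} [Fintype V] [DecidableEq V]
    (H : SimpleGraph V) (α β : ℝ) (hα : 0 < α) (hβ : 0 < β)
    (k : ℕ) (hk : 0 < k) (m : ℝ) (hm : 1 ≤ m) (hpow : m ≤ (α * β) ^ k)
    (A₀ B₀ : Finset V)
    (hball : ∀ v : V, ((ballFinset H (2 * k) {v} ∩ A₀).card : ℝ) ≤ m) :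
    ∀ A₁ B₁ : Finset V, A₁ ⊆ A₀ → B₁ ⊆ B₀ → A₁.Nonempty →
      ∃ X Y : Finset V, GoodPair H α β A₁ B₁ X Y ∧ (X ∪ Y).Nonempty ∧
        (X.card : ℝ) ≤ m ∧ ((closedNbhd H Y ∩ A₁).card : ℝ) ≤ m := by
  intro A₁ B₁ hA hB hne
  obtain ⟨v, hv⟩ := hne
  set a : ℕ → Finset V := fun i => ballFinset H (2 * i) {v} ∩ A₁ with ha
  set b : ℕ → Finset V := fun i => ballFinset H (2 * i + 1) {v} ∩ B₁ with hb
  have hva : ∀ i, v ∈ a i := by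
    intro i
    exact Finset.mem_inter.mpr
      ⟨ball_mono_r' H {v} (Nat.zero_le _) (Finset.mem_singleton_self v), hv⟩
  have hcard_a : ∀ i, i ≤ k → ((a i).card : ℝ) ≤ m := by
    intro i hik
    have hsub : a i ⊆ ballFinset H (2 * k) {v} ∩ A₀ :=
      Finset.inter_subset_inter (ball_mono_r' H _ (by omega)) hA
    exact le_trans (Nat.cast_le.mpr (Finset.card_le_card hsub)) (hball v)
  have hNa : ∀ i, closedNbhd H (a i) ∩ B₁ ⊆ b i := by
    intro i x hx
    obtain ⟨hx1, hx2⟩ := Finset.mem_inter.mp hx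
    refine Finset.mem_inter.mpr ⟨?_, hx2⟩
    exact closedNbhd_mono' H (Finset.inter_subset_left) hx1
  have hNb : ∀ i, closedNbhd H (b i) ∩ A₁ ⊆ a (i + 1) := by
    intro i x hx
    obtain ⟨hx1, hx2⟩ := Finset.mem_inter.mp hx
    refine Finset.mem_inter.mpr ⟨?_, hx2⟩
    have h1 : x ∈ closedNbhd H (ballFinset H (2 * i + 1) {v}) :=
      closedNbhd_mono' H (Finset.inter_subset_left) hx1
    have h2 : (2 : ℕ) * (i + 1) = (2 * i + 1) + 1 := by ring
    rw [h2]
    exact h1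
  by_cases h1 : ∃ i < k, ((closedNbhd H (a i) ∩ B₁).card : ℝ) ≤ β * ((a i).card : ℝ)
  · obtain ⟨i, hik, hle⟩ := h1
    refine ⟨a i, ∅, ⟨Finset.inter_subset_right, Finset.empty_subset _,
      Finset.disjoint_empty_right _, fun x _ y hy => absurd hy (Finset.notMem_empty y),
      hle, by simp [closedNbhd_empty']⟩, ?_, hcard_a i hik.le, ?_⟩
    · exact ⟨v, Finset.mem_union_left _ (hva i)⟩
    · rw [closedNbhd_empty']
      simp only [Finset.empty_inter, Finset.card_empty, Nat.cast_zero]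
      linarith
  push_neg at h1
  by_cases h2 : ∃ i < k, ((closedNbhd H (b i) ∩ A₁).card : ℝ) ≤ α * ((b i).card : ℝ)
  · obtain ⟨i, hik, hle⟩ := h2
    have hbne : (b i).Nonempty := by
      rw [← Finset.card_pos]
      by_contra hc
      have : (b i).card = 0 := by omega
      have h0 : (closedNbhd H (a i) ∩ B₁).card = 0 := by
        have := Finset.card_le_card (hNa i)
        omega
      have := h1 i hik
      rw [h0] at this
      push_cast at this
      have hposa : (1 : ℝ) ≤ ((a i).card : ℝ) := by
        have : 1 ≤ (a i).card := Finset.card_pos.mpr ⟨v, hva i⟩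
        exact_mod_cast this
      nlinarith
    refine ⟨∅, b i, ⟨Finset.empty_subset _, Finset.inter_subset_right,
      Finset.disjoint_empty_left _, fun x hx => absurd hx (Finset.notMem_empty x),
      by simp [closedNbhd_empty'], hle⟩, ?_, by simp; linarith, ?_⟩
    · obtain ⟨y, hy⟩ := hbne
      exact ⟨y, Finset.mem_union_right _ hy⟩
    · calc ((closedNbhd H (b i) ∩ A₁).card : ℝ)
          ≤ ((a (i + 1)).card : ℝ) := Nat.cast_le.mpr (Finset.card_le_card (hNb i))
        _ ≤ m := hcard_a (i + 1) (by omega)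
  push_neg at h2
  exfalso
  have step : ∀ i, i < k → α * β * ((a i).card : ℝ) < ((a (i + 1)).card : ℝ) := by
    intro i hik
    have hb1 : β * ((a i).card : ℝ) < ((b i).card : ℝ) :=
      lt_of_lt_of_le (h1 i hik) (Nat.cast_le.mpr (Finset.card_le_card (hNa i)))
    have ha1 : α * ((b i).card : ℝ) < ((a (i + 1)).card : ℝ) :=
      lt_of_lt_of_le (h2 i hik) (Nat.cast_le.mpr (Finset.card_le_card (hNb i)))
    nlinarith
  have key : ∀ i, i ≤ k → (α * β) ^ i ≤ ((a i).card : ℝ) := by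
    intro i
    induction i with
    | zero =>
      intro _
      simp only [pow_zero]
      have : 1 ≤ (a 0).card := Finset.card_pos.mpr ⟨v, hva 0⟩
      exact_mod_cast this
    | succ n ih =>
      intro hnk
      have hnk' : n < k := by omega
      have h1' := ih hnk'.le
      have h2' := step n hnk'
      have hab : 0 < α * β := mul_pos hα hβ
      calc (α * β) ^ (n + 1) = α * β * (α * β) ^ n := by ring
        _ ≤ α * β * ((a n).card : ℝ) := by nlinarith
        _ ≤ ((a (n + 1)).card : ℝ) := h2'.le
  obtain ⟨j, rfl⟩ : ∃ j, k = j + 1 := ⟨k - 1, (Nat.succ_pred_eq_of_pos hk).symm⟩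
  have hkey := key j (by omega)
  have hstep := step j (by omega)
  have hfin := hcard_a (j + 1) le_rfl
  have hab : 0 < α * β := mul_pos hα hβ
  have : (α * β) ^ (j + 1) < ((a (j + 1)).card : ℝ) := by
    calc (α * β) ^ (j + 1) = α * β * (α * β) ^ j := by ring
      _ ≤ α * β * ((a j).card : ℝ) := by nlinarith
      _ < ((a (j + 1)).card : ℝ) := hstep
  linarith
end

section
/- Let p and q be positive integers and let 𝓕 be a finite family of finite sets, each of size at most p. Then there is a subfamily 𝓕' of 𝓕 with |𝓕'| ≤ binom(p + q, p) that q-represents 𝓕. -/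
/-
Take a subfamily `G ⊆ F` that `q`-represents `F` and is minimal for this. Minimality gives every
`X ∈ G` a set `S X` of size at most `q` that is disjoint from `X` but meets every other member
of `G`. The pairs `(X, S X)` thus form a Bollobás system, and Bollobás's inequality
`∑ 1 / C(|A| + |B|, |A|) ≤ 1` bounds `|G|` by `C(p + q, p)`.

Bollobás's inequality is proved by induction on a ground set `U`. For `x ∈ U`, the pairs whose
first set avoids `x`, with `x` deleted from the second set, form a Bollobás system on `U \ {x}`.
Summing the induction hypotheses over `x ∈ U` gives `|U|` times the weight sum of the system,
since `∑_{x ∈ U \ A} 1 / C(|A| + |B \ {x}|, |A|) = |U| / C(|A| + |B|, |A|)` whenever `B` is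
nonempty; and if some `B` is empty, the system has only one pair.
-/

/-- A subfamily `F'` of a family `F` of finite sets `q`-represents `F` if for every set
`S` of size at most `q` such that some member of `F` is disjoint from `S`, there is a
member of `F'` that is also disjoint from `S`. -/
def QRepresents {α : Type} (q : ℕ) (F' F : Finset (Finset α)) : Prop :=
  ∀ S : Finset α, S.card ≤ q → (∃ X ∈ F, Disjoint X S) → ∃ X ∈ F', Disjoint X S

open Finset

theorem succ_mul_inv_choose_add (a c : ℕ) :
    (c + 1 : ℚ) * ((a + c).choose a : ℚ)⁻¹ = (a + c + 1) * ((a + c + 1).choose a : ℚ)⁻¹ := by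
  have h := Nat.choose_mul_succ_eq (a + c) a
  rw [show a + c + 1 - a = c + 1 by omega] at h
  have h₁ : ((a + c).choose a : ℚ) ≠ 0 := by exact_mod_cast (Nat.choose_pos (by omega)).ne'
  have h₂ : ((a + c + 1).choose a : ℚ) ≠ 0 := by exact_mod_cast (Nat.choose_pos (by omega)).ne'
  field_simp
  rw [mul_comm]
  exact_mod_cast h.symm

section BollobasSystem

variable {α : Type*}

def pairWeight (z : Finset α × Finset α) : ℚ := ((#z.1 + #z.2).choose #z.1 : ℚ)⁻¹

theorem pairWeight_mk (A B : Finset α) :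
    pairWeight (A, B) = ((#A + #B).choose #A : ℚ)⁻¹ := rfl

theorem pairWeight_le_one (z : Finset α × Finset α) : pairWeight z ≤ 1 :=
  inv_le_one_of_one_le₀ (by exact_mod_cast Nat.choose_pos (Nat.le_add_right _ _))

theorem inv_choose_le_pairWeight {p q : ℕ} {z : Finset α × Finset α} (hp : #z.1 ≤ p)
    (hq : #z.2 ≤ q) : ((p + q).choose p : ℚ)⁻¹ ≤ pairWeight z := by
  have hchoose : (#z.1 + #z.2).choose #z.1 ≤ (p + q).choose p :=
    calc (#z.1 + #z.2).choose #z.1 ≤ (#z.1 + q).choose #z.1 := Nat.choose_le_choose _ (by omega)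
      _ = (q + #z.1).choose q := by rw [add_comm, Nat.choose_symm_add]
      _ ≤ (q + p).choose q := Nat.choose_le_choose _ (by omega)
      _ = (p + q).choose p := by rw [add_comm, Nat.choose_symm_add]
  exact inv_anti₀ (by exact_mod_cast Nat.choose_pos (Nat.le_add_right _ _))
    (by exact_mod_cast hchoose)

theorem sum_pairWeight_erase [DecidableEq α] {U A B : Finset α} (hAB : Disjoint A B)
    (hB : B.Nonempty) (hU : A ∪ B ⊆ U) :
    ∑ x ∈ U \ A, pairWeight (A, B.erase x) = #U * pairWeight (A, B) := by
  obtain ⟨c, hc⟩ : ∃ c, #B = c + 1 := Nat.exists_eq_succ_of_ne_zero hB.card_pos.ne'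
  have hin : (U \ A).filter (· ∈ B) = B := by
    ext x
    simp only [mem_filter, mem_sdiff]
    exact ⟨fun h => h.2, fun hx => ⟨⟨hU (mem_union_right _ hx), disjoint_right.1 hAB hx⟩, hx⟩⟩
  have hout : (U \ A).filter (· ∉ B) = U \ (A ∪ B) := by
    ext x
    simp only [mem_filter, mem_sdiff, mem_union]
    tauto
  have hsumIn : ∑ x ∈ B, pairWeight (A, B.erase x) = (c + 1) * ((#A + c).choose #A : ℚ)⁻¹ := by
    rw [sum_congr rfl fun x hx => by
      rw [pairWeight_mk, card_erase_of_mem hx, hc, Nat.add_sub_cancel], sum_const, hc, nsmul_eq_mul]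
    push_cast
    rfl
  have hsumOut : ∑ x ∈ U \ (A ∪ B), pairWeight (A, B.erase x)
      = (#U - (#A + #B)) * pairWeight (A, B) := by
    rw [sum_congr rfl fun x hx => by
      rw [erase_eq_of_notMem fun h => (mem_sdiff.1 hx).2 (mem_union_right _ h)],
      sum_const, nsmul_eq_mul, card_sdiff_of_subset hU, Nat.cast_sub (card_le_card hU),
      card_union_of_disjoint hAB, Nat.cast_add]
  rw [← sum_filter_add_sum_filter_not _ (· ∈ B), hin, hout, hsumIn, hsumOut,
    succ_mul_inv_choose_add, pairWeight_mk, hc, ← add_assoc]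
  push_cast
  ring

structure IsBollobasSystem (𝒜 : Finset (Finset α × Finset α)) : Prop where
  disjoint : ∀ z ∈ 𝒜, Disjoint z.1 z.2
  not_disjoint : ∀ z ∈ 𝒜, ∀ w ∈ 𝒜, z ≠ w → ¬Disjoint z.1 w.2

def pairsAvoiding [DecidableEq α] (x : α) (𝒜 : Finset (Finset α × Finset α)) :
    Finset (Finset α × Finset α) :=
  {z ∈ 𝒜 | x ∉ z.1}.image fun z => (z.1, z.2.erase x)

theorem mem_pairsAvoiding [DecidableEq α] {x : α} {𝒜 : Finset (Finset α × Finset α)}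
    {z : Finset α × Finset α} :
    z ∈ pairsAvoiding x 𝒜 ↔ ∃ w ∈ 𝒜, x ∉ w.1 ∧ (w.1, w.2.erase x) = z := by
  simp only [pairsAvoiding, mem_image, mem_filter, and_assoc]

namespace IsBollobasSystem

variable {𝒜 : Finset (Finset α × Finset α)}

theorem injOn_fst (h𝒜 : IsBollobasSystem 𝒜) :
    Set.InjOn Prod.fst (𝒜 : Set (Finset α × Finset α)) := by
  intro z hz w hw hzw
  by_contra hne
  exact h𝒜.not_disjoint z hz w hw hne (hzw ▸ h𝒜.disjoint w hw)

theorem eq_singleton_of_snd_eq_empty (h𝒜 : IsBollobasSystem 𝒜) {z : Finset α × Finset α}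
    (hz : z ∈ 𝒜) (hz₂ : z.2 = ∅) : 𝒜 = {z} :=
  eq_singleton_iff_unique_mem.2 ⟨hz, fun w hw => by
    by_contra hne
    exact h𝒜.not_disjoint w hw z hz hne (hz₂ ▸ disjoint_empty_right _)⟩

variable [DecidableEq α]

theorem sum_pairWeight_pairsAvoiding (h𝒜 : IsBollobasSystem 𝒜) (x : α) :
    ∑ z ∈ pairsAvoiding x 𝒜, pairWeight z =
      ∑ z ∈ 𝒜 with x ∉ z.1, pairWeight (z.1, z.2.erase x) :=
  sum_image fun _ hz _ hw hzw =>
    h𝒜.injOn_fst (mem_filter.1 hz).1 (mem_filter.1 hw).1 (Prod.ext_iff.1 hzw).1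

theorem pairsAvoiding (h𝒜 : IsBollobasSystem 𝒜) (x : α) :
    IsBollobasSystem (pairsAvoiding x 𝒜) where
  disjoint := by
    intro _ hz'
    obtain ⟨z, hz, -, rfl⟩ := mem_pairsAvoiding.1 hz'
    exact (h𝒜.disjoint z hz).mono_right (erase_subset _ _)
  not_disjoint := by
    intro _ hz' _ hw' hne hdisj
    obtain ⟨z, hz, hxz, rfl⟩ := mem_pairsAvoiding.1 hz'
    obtain ⟨w, hw, -, rfl⟩ := mem_pairsAvoiding.1 hw'
    refine h𝒜.not_disjoint z hz w hw (by rintro rfl; exact hne rfl) (disjoint_left.2 ?_)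
    exact fun y hy hyw => disjoint_left.1 hdisj hy (mem_erase.2 ⟨ne_of_mem_of_not_mem hy hxz, hyw⟩)

theorem sum_pairWeight_le_one_of_subset (h𝒜 : IsBollobasSystem 𝒜) {U : Finset α}
    (hU : ∀ z ∈ 𝒜, z.1 ∪ z.2 ⊆ U) : ∑ z ∈ 𝒜, pairWeight z ≤ 1 := by
  induction U using Finset.strongInduction generalizing 𝒜 with
  | H U ih =>
  by_cases hempty : ∃ z ∈ 𝒜, z.2 = ∅
  · obtain ⟨z, hz, hz₂⟩ := hempty
    rw [h𝒜.eq_singleton_of_snd_eq_empty hz hz₂, sum_singleton]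
    exact pairWeight_le_one z
  push Not at hempty
  obtain rfl | ⟨z, hz⟩ := 𝒜.eq_empty_or_nonempty
  · simp
  have hUpos : (0 : ℚ) < #U := by
    obtain ⟨y, hy⟩ := hempty z hz
    exact_mod_cast card_pos.2 ⟨y, hU z hz (mem_union_right _ hy)⟩
  have hlink : ∀ x ∈ U, ∑ z ∈ 𝒜 with x ∉ z.1, pairWeight (z.1, z.2.erase x) ≤ 1 := by
    intro x hx
    rw [← h𝒜.sum_pairWeight_pairsAvoiding x]
    refine ih _ (erase_ssubset hx) (h𝒜.pairsAvoiding x) fun _ hw' => ?_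
    obtain ⟨w, hw, hxw, rfl⟩ := mem_pairsAvoiding.1 hw'
    rw [← erase_eq_of_notMem hxw, ← erase_union_distrib]
    exact erase_subset_erase x (hU w hw)
  refine le_of_mul_le_mul_left ?_ hUpos
  calc (#U : ℚ) * ∑ z ∈ 𝒜, pairWeight z
      = ∑ z ∈ 𝒜, ∑ x ∈ U \ z.1, pairWeight (z.1, z.2.erase x) := by
        rw [mul_sum]
        exact sum_congr rfl fun w hw =>
          (sum_pairWeight_erase (h𝒜.disjoint w hw) (hempty w hw) (hU w hw)).symm
    _ = ∑ x ∈ U, ∑ z ∈ 𝒜 with x ∉ z.1, pairWeight (z.1, z.2.erase x) :=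
        sum_comm' fun z x => by simp only [mem_sdiff, mem_filter]; tauto
    _ ≤ ∑ x ∈ U, 1 := sum_le_sum hlink
    _ = #U * 1 := by simp

theorem sum_pairWeight_le_one (h𝒜 : IsBollobasSystem 𝒜) : ∑ z ∈ 𝒜, pairWeight z ≤ 1 :=
  h𝒜.sum_pairWeight_le_one_of_subset fun _ hz => subset_biUnion_of_mem (fun z => z.1 ∪ z.2) hz

theorem card_le_choose (h𝒜 : IsBollobasSystem 𝒜) {p q : ℕ} (hp : ∀ z ∈ 𝒜, #z.1 ≤ p)
    (hq : ∀ z ∈ 𝒜, #z.2 ≤ q) : #𝒜 ≤ (p + q).choose p := by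
  have hpos : (0 : ℚ) < (p + q).choose p := by
    exact_mod_cast Nat.choose_pos (Nat.le_add_right _ _)
  have hweight : (#𝒜 : ℚ) * ((p + q).choose p : ℚ)⁻¹ ≤ 1 :=
    calc (#𝒜 : ℚ) * ((p + q).choose p : ℚ)⁻¹ = ∑ _z ∈ 𝒜, ((p + q).choose p : ℚ)⁻¹ := by
          rw [sum_const, nsmul_eq_mul]
      _ ≤ ∑ z ∈ 𝒜, pairWeight z :=
          sum_le_sum fun z hz => inv_choose_le_pairWeight (hp z hz) (hq z hz)
      _ ≤ 1 := h𝒜.sum_pairWeight_le_one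
  rw [mul_inv_le_iff₀ hpos, one_mul] at hweight
  exact_mod_cast hweight

end IsBollobasSystem

end BollobasSystem

section QRepresents

variable {α : Type} [DecidableEq α] {q : ℕ} {G F : Finset (Finset α)}

theorem exists_minimal_qRepresents (q : ℕ) (F : Finset (Finset α)) :
    ∃ G ⊆ F, QRepresents q G F ∧ ∀ X ∈ G, ¬QRepresents q (G.erase X) F := by
  classical
  have hF : F ∈ F.powerset.filter (QRepresents q · F) :=
    mem_filter.2 ⟨mem_powerset_self F, fun _ _ h => h⟩
  obtain ⟨G, hG, hmin⟩ := exists_min_image _ card ⟨F, hF⟩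
  obtain ⟨hGF, hGrep⟩ := mem_filter.1 hG
  refine ⟨G, mem_powerset.1 hGF, hGrep, fun X hX hrep => ?_⟩
  have hle := hmin (G.erase X)
    (mem_filter.2 ⟨mem_powerset.2 ((erase_subset X G).trans (mem_powerset.1 hGF)), hrep⟩)
  exact (card_erase_lt_of_mem hX).not_ge hle

theorem QRepresents.exists_separating_of_not_erase {X : Finset α} (hG : QRepresents q G F)
    (hX : ¬QRepresents q (G.erase X) F) :
    ∃ S : Finset α, #S ≤ q ∧ Disjoint X S ∧ ∀ Y ∈ G, Y ≠ X → ¬Disjoint Y S := by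
  simp only [QRepresents, not_forall, not_exists, not_and] at hX
  obtain ⟨S, hSq, hFS, hGS⟩ := hX
  obtain ⟨Y, hY, hYS⟩ := hG S hSq hFS
  obtain rfl : Y = X := by_contra fun hYX => hGS Y (mem_erase.2 ⟨hYX, hY⟩) hYS
  exact ⟨S, hSq, hYS, fun Z hZ hZY => hGS Z (mem_erase.2 ⟨hZY, hZ⟩)⟩

theorem QRepresents.card_le_choose_of_minimal {p : ℕ} (hG : QRepresents q G F)
    (hmin : ∀ X ∈ G, ¬QRepresents q (G.erase X) F) (hp : ∀ X ∈ G, #X ≤ p) :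
    #G ≤ (p + q).choose p := by
  choose! S hSq hXS hYS using fun X hX => hG.exists_separating_of_not_erase (hmin X hX)
  have h𝒜 : IsBollobasSystem (G.image fun X => (X, S X)) := by
    constructor
    · simp only [mem_image]
      rintro _ ⟨X, hX, rfl⟩
      exact hXS X hX
    · simp only [mem_image]
      rintro _ ⟨X, hX, rfl⟩ _ ⟨Y, hY, rfl⟩ hne
      exact hYS Y hY X hX fun h => hne (h ▸ rfl)
  have hcard : #(G.image fun X => (X, S X)) = #G :=
    card_image_of_injective _ fun X Y h => (Prod.ext_iff.1 h).1
  rw [← hcard]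
  refine h𝒜.card_le_choose ?_ ?_ <;> simp only [mem_image] <;> rintro _ ⟨X, hX, rfl⟩
  exacts [hp X hX, hSq X hX]

end QRepresents

theorem exists_small_representative_subfamily_general {α : Type} (p q : ℕ)
    (F : Finset (Finset α)) (hF : ∀ X ∈ F, X.card ≤ p) :
    ∃ F' ⊆ F, F'.card ≤ (p + q).choose p ∧ QRepresents q F' F := by
  classical
  obtain ⟨G, hGF, hG, hmin⟩ := exists_minimal_qRepresents q F
  exact ⟨G, hGF, hG.card_le_choose_of_minimal hmin fun X hX => hF X (hGF hX), hG⟩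

theorem exists_small_representative_subfamily {α : Type} (p q : ℕ)
    (hp : 0 < p) (hq : 0 < q) (F : Finset (Finset α)) (hF : ∀ X ∈ F, X.card ≤ p) :
    ∃ F' ⊆ F, F'.card ≤ (p + q).choose p ∧ QRepresents q F' F :=
  exists_small_representative_subfamily_general p q F hF
end
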